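/- Let τ be a constructive translation from low-level variables V_L to high-level variables V_H, and let x_L, x_H be partial settings of X_L ⊆ V_L and X_H ⊆ V_H respectively. Then τ(x_L) = x_H if and only if: (1) for each X ∈ X_H, τ_X maps the set θ_X of low-level cell-valuations agreeing with x_L on X_L ∩ Π_X onto exactly {π_X(x_H)}; and (2) for each high-level variable V ∉ X_H, τ_V maps θ_V onto all of Val(V). -/

import Mathlib

open scoped Classical

/-- An intervention: a partial assignment of values to variables. -/
def Itv (V : Type*) (Val : V → Type*) := ∀ v, Option (Val v)

/-- A potential outcome `Y_x`: an outcome variable together with an intervention. -/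
structure PO (V : Type*) (Val : V → Type*) where
  Y : V
  x : Itv V Val

/-- A Rubin causal model (with a probability distribution on its units). -/
structure RCM (U : Type*) (V : Type*) (Val : V → Type*) where
  O : Set (PO V Val)
  F : (o : PO V Val) → U → Val o.Y
  P : U → ℝ
  P_nonneg : ∀ u, 0 ≤ P u
  P_sum : ∑ᶠ u, P u = 1

/-- Joint valuations ("counterfactuals") of a set of potential outcomes. -/
def CFVal {V : Type*} {Val : V → Type*} (O : Set (PO V Val)) :=
  (o : O) → Val o.1.Y

/-- The (pushforward) counterfactual distribution of an RCM, computed on a set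
of potential outcomes. -/
noncomputable def RCM.cfOn {U V : Type*} {Val : V → Type*} (R : RCM U V Val)
    (O : Set (PO V Val)) (g : CFVal O) : ℝ :=
  ∑ᶠ u, if ∀ o : O, R.F o.1 u = g o then R.P u else 0

/-- The counterfactual distribution of an RCM on its own defined outcomes. -/
noncomputable def RCM.cf {U V : Type*} {Val : V → Type*} (R : RCM U V Val)
    (g : CFVal R.O) : ℝ := R.cfOn R.O g

/-- Effectiveness: intervened variables take their intervened values. -/
def RCM.Effective {U V : Type*} {Val : V → Type*} (R : RCM U V Val) : Prop :=
  ∀ o, o ∈ R.O → ∀ u, ∀ y : Val o.Y, o.x o.Y = some y → R.F o u = y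

/-- Update an intervention at one variable. -/
noncomputable def upd {V : Type*} {Val : V → Type*} (x : Itv V Val) (Y : V) (y : Val Y) :
    Itv V Val :=
  fun v => if h : v = Y then some (cast (congrArg Val h.symm) y) else x v

/-- Composition, at every unit, whenever the relevant outcomes are defined. -/
def RCM.Composition {U V : Type*} {Val : V → Type*} (R : RCM U V Val) : Prop :=
  ∀ (u : U) (Y Z : V) (w : Itv V Val),
    (⟨Y, w⟩ : PO V Val) ∈ R.O → (⟨Z, w⟩ : PO V Val) ∈ R.O →
    (⟨Z, upd w Y (R.F ⟨Y, w⟩ u)⟩ : PO V Val) ∈ R.O →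
    R.F ⟨Z, upd w Y (R.F ⟨Y, w⟩ u)⟩ u = R.F ⟨Z, w⟩ u

/-- Reversibility, at every unit, whenever the relevant outcomes are defined. -/
def RCM.Reversibility {U V : Type*} {Val : V → Type*} (R : RCM U V Val) : Prop :=
  ∀ (u : U) (Y Z : V) (w : Itv V Val) (y : Val Y) (z : Val Z), Y ≠ Z →
    (⟨Y, upd w Z z⟩ : PO V Val) ∈ R.O → (⟨Z, upd w Y y⟩ : PO V Val) ∈ R.O →
    (⟨Y, w⟩ : PO V Val) ∈ R.O →
    R.F ⟨Y, upd w Z z⟩ u = y → R.F ⟨Z, upd w Y y⟩ u = z →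
    R.F ⟨Y, w⟩ u = y

/-- A structural causal model. -/
structure SCM (Uex : Type*) (V : Type*) (Val : V → Type*) where
  Pa : V → Set V
  Pa_irr : ∀ v, v ∉ Pa v
  f : (v : V) → ((w : V) → Val w) → Uex → Val v
  f_dep : ∀ v a b u, (∀ w ∈ Pa v, a w = b w) → f v a u = f v b u
  P : Uex → ℝ
  P_nonneg : ∀ u, 0 ≤ P u
  P_sum : ∑ᶠ u, P u = 1

/-- `s` solves the manipulated model `M_x` under exogenous setting `u`. -/
def SCM.IsSol {Uex V : Type*} {Val : V → Type*} (M : SCM Uex V Val)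
    (x : Itv V Val) (u : Uex) (s : ∀ w, Val w) : Prop :=
  ∀ w, s w = (x w).getD (M.f w s u)

/-- `M` has a unique solution under every intervention and exogenous setting. -/
def SCM.Uniq {Uex V : Type*} {Val : V → Type*} (M : SCM Uex V Val) : Prop :=
  ∀ (x : Itv V Val) (u : Uex), ∃! s, M.IsSol x u s

/-- The potential outcome `Y_x(u)` of an SCM with unique solutions. -/
noncomputable def SCM.po {Uex V : Type*} {Val : V → Type*} (M : SCM Uex V Val)
    (h : M.Uniq) (o : PO V Val) (u : Uex) : Val o.Y :=
  (h o.x u).exists.choose o.Y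

/-- The counterfactual distribution of an SCM on a set of potential outcomes. -/
noncomputable def SCM.cf {Uex V : Type*} {Val : V → Type*} (M : SCM Uex V Val)
    (h : M.Uniq) (O : Set (PO V Val)) (g : CFVal O) : ℝ :=
  ∑ᶠ u, if ∀ o : O, M.po h o.1 u = g o then M.P u else 0

/-- `M` represents `R`: the counterfactual distribution of `M` marginalizes to
that of `R` on the outcomes defined by `R`. -/
def Represents {Uex U V : Type*} {Val : V → Type*} (M : SCM Uex V Val) (h : M.Uniq)
    (R : RCM U V Val) : Prop :=
  ∀ g : CFVal R.O, M.cf h R.O g = R.cf g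

/-- `R` is representable by some SCM with unique solutions. -/
def RCM.Representable {U V : Type*} {Val : V → Type*} (R : RCM U V Val) : Prop :=
  ∃ (Uex : Type) (M : SCM Uex V Val) (h : M.Uniq), Finite Uex ∧ Represents M h R

/-- `R'` extends `R`. -/
def RCM.Extends {U V : Type*} {Val : V → Type*} (R' R : RCM U V Val) : Prop :=
  R.O ⊆ R'.O ∧ (∀ o ∈ R.O, R'.F o = R.F o) ∧ R'.P = R.P

/-- A full RCM defines every potential outcome. -/
def RCM.Full {U V : Type*} {Val : V → Type*} (R : RCM U V Val) : Prop :=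
  R.O = Set.univ

/-- `R'` is a submodel of `R`. -/
def Submodel {U V : Type*} {Val : V → Type*} (R' R : RCM U V Val) : Prop :=
  R'.O ⊆ R.O ∧ (∀ o ∈ R'.O, R'.F o = R.F o) ∧ R'.P = R.P

/-- A constructive translation from low-level variables `VL` to high-level
variables `VH`: a partition of (part of) `VL` into cells, one nonempty cell per
high-level variable, with a surjective value-map for each cell. -/
structure CTrans (VL : Type*) (ValL : VL → Type*) (VH : Type*) (ValH : VH → Type*) where
  cell : VL → Option VH
  cell_ne : ∀ Vh : VH, ∃ w, cell w = some Vh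
  tau : (Vh : VH) → ((w : {w : VL // cell w = some Vh}) → ValL w.1) → ValH Vh
  tau_surj : ∀ Vh, Function.Surjective (tau Vh)

/-- The translation of total low-level valuations. -/
def CTrans.tot {VL VH : Type*} {ValL : VL → Type*} {ValH : VH → Type*}
    (T : CTrans VL ValL VH ValH) (g : ∀ v, ValL v) : ∀ Vh, ValH Vh :=
  fun Vh => T.tau Vh (fun w => g w.1)

/-- The total valuations extending a partial valuation. -/
def extVals {V : Type*} {Val : V → Type*} (x : Itv V Val) : Set (∀ v, Val v) :=
  {g | ∀ v, ∀ c, x v = some c → g v = c}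

/-- Canonical extension of a translation to partial valuations:
`τ(x_L) = x_H` iff the `τ`-image of the extensions of `x_L` is the set of
extensions of `x_H`. -/
def CTrans.PartTrans {VL VH : Type*} {ValL : VL → Type*} {ValH : VH → Type*}
    (T : CTrans VL ValL VH ValH) (xL : Itv VL ValL) (xH : Itv VH ValH) : Prop :=
  T.tot '' extVals xL = extVals xH

/-- The valuations of the cell of `Vh` that agree with `x_L` on the part of
its domain lying in that cell. -/
def CTrans.theta {VL VH : Type*} {ValL : VL → Type*} {ValH : VH → Type*}
    (T : CTrans VL ValL VH ValH) (xL : Itv VL ValL) (Vh : VH) :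
    Set ((w : {w : VL // T.cell w = some Vh}) → ValL w.1) :=
  {p | ∀ (w : {w : VL // T.cell w = some Vh}) (c : ValL w.1), xL w.1 = some c → p w = c}

/-- The interventions appearing in a set of potential outcomes. -/
def Intervs {V : Type*} {Val : V → Type*} (O : Set (PO V Val)) : Set (Itv V Val) :=
  {x | ∃ Y, (⟨Y, x⟩ : PO V Val) ∈ O}

/-- The partial valuation recording the outcomes a counterfactual assigns
under a fixed intervention. -/
noncomputable def ypart {V : Type*} {Val : V → Type*} (O : Set (PO V Val))
    (g : CFVal O) (x : Itv V Val) : Itv V Val :=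
  fun Y => if h : (⟨Y, x⟩ : PO V Val) ∈ O then some (g ⟨⟨Y, x⟩, h⟩) else none

/-- Counterfactual translation induced by a constructive translation. -/
def CTrans.CFTrans {VL VH : Type*} {ValL : VL → Type*} {ValH : VH → Type*}
    (T : CTrans VL ValL VH ValH) (OL : Set (PO VL ValL)) (OH : Set (PO VH ValH))
    (gL : CFVal OL) (gH : CFVal OH) : Prop :=
  (∀ xL ∈ Intervs OL, ∃ xH ∈ Intervs OH, T.PartTrans xL xH) ∧
  (∀ xH ∈ Intervs OH, ∃ xL ∈ Intervs OL, T.PartTrans xL xH) ∧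
  (∀ xL ∈ Intervs OL, ∀ xH ∈ Intervs OH, T.PartTrans xL xH →
    T.PartTrans (ypart OL gL xL) (ypart OH gH xH))

/-- `H ≺_τ L`: the counterfactual distribution of `H` is the pushforward of
that of `L` under the counterfactual translation induced by `T`. -/
def Abstraction {UH UL VH VL : Type*} {ValH : VH → Type*} {ValL : VL → Type*}
    (T : CTrans VL ValL VH ValH) (H : RCM UH VH ValH) (L : RCM UL VL ValL) : Prop :=
  ∀ gH : CFVal H.O,
    H.cf gH = ∑ᶠ gL : CFVal L.O,
      if T.CFTrans L.O H.O gL gH then L.cf gL else 0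

/-!
Everything factors through products of sets. The extensions of a partial valuation form the
product over all variables of `{c}` (intervened value `c`) or `univ` (not intervened). A total
low-level valuation is translated cell by cell, and cells are disjoint, so `τ` maps the extensions
of `x_L` onto the product of the sets `τ_V '' θ_V`. Each `θ_V` is nonempty, and a product of
nonempty sets determines its factors.
-/

open Set

theorem Set.univ_pi_inj {ι : Type*} {α : ι → Type*} {t₁ t₂ : ∀ i, Set (α i)}
    (ht₁ : ∀ i, (t₁ i).Nonempty) : pi univ t₁ = pi univ t₂ ↔ t₁ = t₂ := by
  refine ⟨fun h => funext fun i => ?_, congrArg _⟩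
  have hne : (pi univ t₁).Nonempty := univ_pi_nonempty_iff.2 ht₁
  calc t₁ i = (fun f => f i) '' pi univ t₁ := (eval_image_univ_pi hne).symm
    _ = (fun f => f i) '' pi univ t₂ := by rw [h]
    _ = t₂ i := eval_image_univ_pi (h ▸ hne)

theorem extVals_eq_univ_pi {V : Type*} {Val : V → Type*} (x : Itv V Val) :
    extVals x = pi univ fun v => (x v).elim univ fun c => {c} := by
  ext g
  simp only [extVals, mem_ofPred_eq, mem_univ_pi]
  refine forall_congr' fun v => ?_
  cases x v <;> simp [eq_comm]

theorem extVals_nonempty {V : Type*} {Val : V → Type*} [∀ v, Nonempty (Val v)]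
    (x : Itv V Val) : (extVals x).Nonempty :=
  ⟨fun v => (x v).getD (Classical.arbitrary _), fun v c h => by simp [h]⟩

namespace CTrans

variable {VL VH : Type*} {ValL : VL → Type*} {ValH : VH → Type*}
  (T : CTrans VL ValL VH ValH)

def restrict (g : ∀ v, ValL v) : ∀ Vh, (w : {w : VL // T.cell w = some Vh}) → ValL w.1 :=
  fun _ w => g w.1

theorem tot_eq_piMap_comp_restrict : T.tot = Pi.map T.tau ∘ T.restrict := rfl

def glue (p : ∀ Vh, (w : {w : VL // T.cell w = some Vh}) → ValL w.1) (g₀ : ∀ v, ValL v)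
    (v : VL) : ValL v :=
  match hc : T.cell v with
  | some Vh => p Vh ⟨v, hc⟩
  | none => g₀ v

theorem glue_of_cell_eq_some (p : ∀ Vh, (w : {w : VL // T.cell w = some Vh}) → ValL w.1)
    (g₀ : ∀ v, ValL v) {v : VL} {Vh : VH} (hc : T.cell v = some Vh) :
    T.glue p g₀ v = p Vh ⟨v, hc⟩ := by
  unfold glue
  split
  · rename_i Vh' hc'
    obtain rfl : Vh' = Vh := Option.some.inj (hc'.symm.trans hc)
    rfl
  · simp_all

theorem glue_of_cell_eq_none (p : ∀ Vh, (w : {w : VL // T.cell w = some Vh}) → ValL w.1)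
    (g₀ : ∀ v, ValL v) {v : VL} (hc : T.cell v = none) : T.glue p g₀ v = g₀ v := by
  unfold glue
  split <;> simp_all

theorem restrict_glue (p : ∀ Vh, (w : {w : VL // T.cell w = some Vh}) → ValL w.1)
    (g₀ : ∀ v, ValL v) : T.restrict (T.glue p g₀) = p :=
  funext fun _ => funext fun w => T.glue_of_cell_eq_some p g₀ w.2

theorem restrict_image_extVals [∀ v, Nonempty (ValL v)] (xL : Itv VL ValL) :
    T.restrict '' extVals xL = pi univ (T.theta xL) := by
  refine Subset.antisymm ?_ fun p hp => ?_
  · rintro _ ⟨g, hg, rfl⟩ Vh -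
    exact fun w c hw => hg w.1 c hw
  obtain ⟨g₀, hg₀⟩ := extVals_nonempty xL
  refine ⟨T.glue p g₀, fun v c hvc => ?_, T.restrict_glue p g₀⟩
  cases hc : T.cell v with
  | some Vh => rw [T.glue_of_cell_eq_some p g₀ hc]; exact hp Vh trivial ⟨v, hc⟩ c hvc
  | none => rw [T.glue_of_cell_eq_none p g₀ hc]; exact hg₀ v c hvc

theorem tot_image_extVals [∀ v, Nonempty (ValL v)] (xL : Itv VL ValL) :
    T.tot '' extVals xL = pi univ fun Vh => T.tau Vh '' T.theta xL Vh := by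
  rw [tot_eq_piMap_comp_restrict, image_comp, restrict_image_extVals, piMap_image_univ_pi]

theorem theta_nonempty [∀ v, Nonempty (ValL v)] (xL : Itv VL ValL) (Vh : VH) :
    (T.theta xL Vh).Nonempty := by
  obtain ⟨g, hg⟩ := extVals_nonempty xL
  exact ⟨T.restrict g Vh, fun w c hw => hg w.1 c hw⟩

end CTrans

theorem stmt7 {VL VH : Type} {ValL : VL → Type} {ValH : VH → Type}
    [∀ v, Nonempty (ValL v)]
    (T : CTrans VL ValL VH ValH) (xL : Itv VL ValL) (xH : Itv VH ValH) :
    T.PartTrans xL xH ↔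
      ((∀ (Vh : VH) (c : ValH Vh), xH Vh = some c →
          T.tau Vh '' T.theta xL Vh = {c}) ∧
        (∀ Vh : VH, xH Vh = none → T.tau Vh '' T.theta xL Vh = Set.univ)) := by
  rw [CTrans.PartTrans, T.tot_image_extVals, extVals_eq_univ_pi,
    Set.univ_pi_inj fun Vh => (T.theta_nonempty xL Vh).image _, funext_iff]
  refine ⟨fun h => ⟨fun Vh c hc => by simpa [hc] using h Vh,
    fun Vh hn => by simpa [hn] using h Vh⟩, fun ⟨hsome, hnone⟩ Vh => ?_⟩
  cases hx : xH Vh with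
  | none => exact hnone Vh hx
  | some c => exact hsome Vh c hx
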